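/- arXiv:2506.15335 — 2 statements merged into one kernel-verified Lean document; each statement's English description precedes it below -/
import Mathlib

section
/- Let n ≥ 5 and 2 ≤ k ≤ ⌊(n−1)/2⌋. The ideal I_k = (p_k, q_k) of ℝ[x,y] is not a radical ideal; its radical equals the maximal ideal (x, y). -/
/-!
In any `ℝ`-algebra containing a square root `z` of `-1` one has `p_k + z q_k = (x + z y)^k`;
multiplying this by its conjugate (`z ↦ -z`) gives `p_k² + q_k² = (x² + y²)^k`, so `x² + y²` lies
in the radical of `I_k`. Modulo `x² + y²` we have `y² ≡ -x²`, hence `p_k ≡ c x^k` with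
`c = Σ_j C(k, 2j) > 0`; so `x`, and then `y`, lie in the radical, while `I_k ⊆ (x, y)` for `k ≥ 1`.
For `k ≥ 2` the substitution `x ↦ ε`, `y ↦ 0` into the dual numbers kills `p_k` and `q_k` but not
`x`, so `x ∉ I_k` and `I_k` is not radical.
-/

open MvPolynomial

/-- The real part of `(x+iy)^k`: `p_k = Σ_j (−1)^j C(k,2j) x^{k−2j} y^{2j}`. -/
noncomputable def pD (k : ℕ) : MvPolynomial (Fin 2) ℝ :=
  ∑ j ∈ Finset.range (k / 2 + 1),
    C ((-1 : ℝ) ^ j * (k.choose (2 * j) : ℝ)) * X 0 ^ (k - 2 * j) * X 1 ^ (2 * j)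

/-- The imaginary part of `(x+iy)^k`: `q_k = Σ_j (−1)^j C(k,2j+1) x^{k−2j−1} y^{2j+1}`. -/
noncomputable def qD (k : ℕ) : MvPolynomial (Fin 2) ℝ :=
  ∑ j ∈ Finset.range ((k + 1) / 2),
    C ((-1 : ℝ) ^ j * (k.choose (2 * j + 1) : ℝ)) * X 0 ^ (k - (2 * j + 1)) * X 1 ^ (2 * j + 1)

/-- Action of the reflection `s` of the dihedral group on `ℝ[x,y]`. -/
noncomputable def sAct : MvPolynomial (Fin 2) ℝ →ₐ[ℝ] MvPolynomial (Fin 2) ℝ :=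
  aeval ![X 0, -X 1]

/-- Action of the rotation `r` (through angle `2π/n`) of the dihedral group on `ℝ[x,y]`. -/
noncomputable def rAct (n : ℕ) : MvPolynomial (Fin 2) ℝ →ₐ[ℝ] MvPolynomial (Fin 2) ℝ :=
  aeval ![C (Real.cos (2 * Real.pi / n)) * X 0 - C (Real.sin (2 * Real.pi / n)) * X 1,
          C (Real.sin (2 * Real.pi / n)) * X 0 + C (Real.cos (2 * Real.pi / n)) * X 1]

open Finset

theorem Finset.sum_range_succ_eq_sum_even_add_sum_odd {M : Type*} [AddCommMonoid M]
    (f : ℕ → M) (n : ℕ) :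
    ∑ m ∈ range (n + 1), f m
      = ∑ j ∈ range (n / 2 + 1), f (2 * j) + ∑ j ∈ range ((n + 1) / 2), f (2 * j + 1) := by
  induction n with
  | zero => simp
  | succ n ih =>
    rw [sum_range_succ, ih]
    rcases Nat.even_or_odd' n with ⟨t, rfl | rfl⟩
    · rw [show (2 * t + 1) / 2 = t by omega, show (2 * t + 1 + 1) / 2 = t + 1 by omega,
        show 2 * t / 2 = t by omega, sum_range_succ (fun j => f (2 * j + 1))]
      abel
    · rw [show (2 * t + 1 + 1) / 2 = t + 1 by omega, show (2 * t + 1) / 2 = t by omega,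
        show (2 * t + 1 + 1 + 1) / 2 = t + 1 by omega, sum_range_succ (fun j => f (2 * j)) (t + 1),
        show 2 * (t + 1) = 2 * t + 1 + 1 by ring]
      abel

theorem MvPolynomial.ker_constantCoeff {σ R : Type*} [CommSemiring R] :
    RingHom.ker (constantCoeff : MvPolynomial σ R →+* R) = idealOfVars σ R := by
  ext p
  rw [RingHom.mem_ker, ← pow_one (idealOfVars σ R), mem_pow_idealOfVars_iff', constantCoeff_eq]
  simp [Finsupp.degree_eq_zero_iff]

theorem MvPolynomial.idealOfVars_fin_two {R : Type*} [CommSemiring R] :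
    idealOfVars (Fin 2) R = Ideal.span {X 0, X 1} := by
  unfold idealOfVars
  congr 1
  ext p
  simp [Fin.exists_fin_two, eq_comm]

theorem MvPolynomial.isPrime_idealOfVars {σ R : Type*} [CommRing R] [IsDomain R] :
    (idealOfVars σ R).IsPrime :=
  ker_constantCoeff (σ := σ) (R := R) ▸ RingHom.ker_isPrime _

section Evaluation

variable {A : Type*} [CommRing A] [Algebra ℝ A]

theorem aeval_pD_add_mul_aeval_qD (x : Fin 2 → A) {z : A} (hz : z ^ 2 = -1) (k : ℕ) :
    aeval x (pD k) + z * aeval x (qD k) = (x 0 + z * x 1) ^ k := by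
  rw [add_comm (x 0), add_pow, sum_range_succ_eq_sum_even_add_sum_odd, pD, qD, map_sum, map_sum,
    mul_sum]
  congr 1 <;> refine sum_congr rfl fun j _ => ?_
  · rw [mul_pow, pow_mul z, hz]
    simp only [map_mul, map_pow, map_neg, map_one, aeval_X, map_natCast]
    ring
  · rw [mul_pow, pow_succ z, pow_mul z, hz]
    simp only [map_mul, map_pow, map_neg, map_one, aeval_X, map_natCast]
    ring

theorem aeval_pD_sq_add_aeval_qD_sq (x : Fin 2 → A) {z : A} (hz : z ^ 2 = -1) (k : ℕ) :
    aeval x (pD k) ^ 2 + aeval x (qD k) ^ 2 = (x 0 ^ 2 + x 1 ^ 2) ^ k := by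
  calc _ = (aeval x (pD k) + z * aeval x (qD k)) * (aeval x (pD k) + -z * aeval x (qD k)) := by
        linear_combination aeval x (qD k) ^ 2 * hz
    _ = ((x 0 + z * x 1) * (x 0 + -z * x 1)) ^ k := by
        rw [aeval_pD_add_mul_aeval_qD x hz, aeval_pD_add_mul_aeval_qD x (by rwa [neg_sq]), mul_pow]
    _ = (x 0 ^ 2 + x 1 ^ 2) ^ k := by
        congr 1
        linear_combination -x 1 ^ 2 * hz

theorem aeval_pD_of_sq_eq_neg_sq {x : Fin 2 → A} (hx : x 1 ^ 2 = -x 0 ^ 2) (k : ℕ) :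
    aeval x (pD k) =
      algebraMap ℝ A (∑ j ∈ range (k / 2 + 1), (k.choose (2 * j) : ℝ)) * x 0 ^ k := by
  rw [pD, map_sum, map_sum, sum_mul]
  refine sum_congr rfl fun j hj => ?_
  have hjk : 2 * j ≤ k := by have := mem_range.mp hj; omega
  simp only [map_mul, map_pow, map_neg, map_one, aeval_X, map_natCast]
  have hsign : (-1 : A) ^ j * (-1) ^ j = 1 := by rw [← mul_pow]; norm_num
  rw [pow_mul (x 1), hx, neg_pow (x 0 ^ 2), ← pow_mul, ← pow_sub_mul_pow (x 0) hjk]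
  linear_combination (k.choose (2 * j) * x 0 ^ (k - 2 * j) * x 0 ^ (2 * j) : A) * hsign

theorem aeval_qD_of_eq_zero {x : Fin 2 → A} (hx : x 1 = 0) (k : ℕ) : aeval x (qD k) = 0 := by
  simp [qD, hx]

end Evaluation

theorem pD_sq_add_qD_sq (k : ℕ) :
    pD k ^ 2 + qD k ^ 2 = ((X 0 : MvPolynomial (Fin 2) ℝ) ^ 2 + X 1 ^ 2) ^ k := by
  have hmap (p : MvPolynomial (Fin 2) ℝ) : map (algebraMap ℝ ℂ) p = aeval X p := by
    induction p using MvPolynomial.induction_on <;> simp_all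
  apply map_injective _ (algebraMap ℝ ℂ).injective
  simp only [map_add, map_pow, hmap, aeval_X]
  exact aeval_pD_sq_add_aeval_qD_sq X (z := C Complex.I)
    (by rw [← map_pow, Complex.I_sq, map_neg, map_one]) k

noncomputable abbrev dihedralSpechtIdeal (k : ℕ) : Ideal (MvPolynomial (Fin 2) ℝ) :=
  Ideal.span {pD k, qD k}

theorem pD_mem_dihedralSpechtIdeal (k : ℕ) : pD k ∈ dihedralSpechtIdeal k :=
  Ideal.subset_span (Set.mem_insert _ _)

theorem qD_mem_dihedralSpechtIdeal (k : ℕ) : qD k ∈ dihedralSpechtIdeal k :=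
  Ideal.subset_span (Set.mem_insert_of_mem _ rfl)

theorem dihedralSpechtIdeal_le_idealOfVars {k : ℕ} (hk : k ≠ 0) :
    dihedralSpechtIdeal k ≤ idealOfVars (Fin 2) ℝ := by
  have hconst {p} (hp : aeval (0 : Fin 2 → ℝ) p = 0) : p ∈ idealOfVars (Fin 2) ℝ := by
    rwa [← ker_constantCoeff, RingHom.mem_ker, ← Algebra.algebraMap_self_apply (constantCoeff p),
      ← aeval_zero]
  rw [Ideal.span_le, Set.insert_subset_iff, Set.singleton_subset_iff]
  refine ⟨hconst ?_, hconst (aeval_qD_of_eq_zero rfl k)⟩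
  rw [aeval_pD_of_sq_eq_neg_sq (by simp), Pi.zero_apply, zero_pow hk, mul_zero]

theorem X_zero_sq_add_X_one_sq_mem_radical_dihedralSpechtIdeal (k : ℕ) :
    (X 0 ^ 2 + X 1 ^ 2 : MvPolynomial (Fin 2) ℝ) ∈ (dihedralSpechtIdeal k).radical :=
  ⟨k, pD_sq_add_qD_sq k ▸ add_mem
    (Ideal.pow_mem_of_mem _ (pD_mem_dihedralSpechtIdeal k) 2 two_pos)
    (Ideal.pow_mem_of_mem _ (qD_mem_dihedralSpechtIdeal k) 2 two_pos)⟩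

theorem idealOfVars_le_radical_dihedralSpechtIdeal (k : ℕ) :
    idealOfVars (Fin 2) ℝ ≤ (dihedralSpechtIdeal k).radical := by
  set J := (dihedralSpechtIdeal k).radical
  have hsum := X_zero_sq_add_X_one_sq_mem_radical_dihedralSpechtIdeal k
  set f := Ideal.Quotient.mk J
  have hsq : f (X 1) ^ 2 = -f (X 0) ^ 2 := by
    have := Ideal.Quotient.eq_zero_iff_mem.mpr hsum
    rw [map_add, map_pow, map_pow] at this
    linear_combination this
  have hp := aeval_pD_of_sq_eq_neg_sq (x := fun i => f (X i)) hsq k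
  rw [← mkₐ_eq_aeval, Ideal.Quotient.mkₐ_eq_mk, Ideal.Quotient.eq_zero_iff_mem.mpr
    (Ideal.le_radical (pD_mem_dihedralSpechtIdeal k))] at hp
  have hunit :
      IsUnit (algebraMap ℝ (_ ⧸ J) (∑ j ∈ range (k / 2 + 1), (k.choose (2 * j) : ℝ))) := by
    refine (isUnit_iff_ne_zero.mpr (ne_of_gt ?_)).map _
    exact sum_pos' (fun j _ => by positivity) ⟨0, by simp⟩
  have hx0 : X 0 ∈ J := Ideal.radical_isRadical _ ⟨k, Ideal.Quotient.eq_zero_iff_mem.mp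
    (by rw [map_pow]; exact hunit.mul_right_eq_zero.mp hp.symm)⟩
  have hx1 : X 1 ∈ J := Ideal.radical_isRadical _ ⟨2, by
    rw [show (X 1 : MvPolynomial (Fin 2) ℝ) ^ 2 = (X 0 ^ 2 + X 1 ^ 2) - X 0 * X 0 by ring]
    exact sub_mem hsum (Ideal.mul_mem_left _ _ hx0)⟩
  rw [idealOfVars_fin_two, Ideal.span_le, Set.insert_subset_iff, Set.singleton_subset_iff]
  exact ⟨hx0, hx1⟩

theorem X_zero_notMem_dihedralSpechtIdeal {k : ℕ} (hk : 2 ≤ k) :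
    (X 0 : MvPolynomial (Fin 2) ℝ) ∉ dihedralSpechtIdeal k := by
  set φ := aeval (R := ℝ) ![(DualNumber.eps : DualNumber ℝ), 0]
  have hε : (DualNumber.eps : DualNumber ℝ) ^ 2 = 0 := by rw [sq, DualNumber.eps_mul_eps]
  have hker : dihedralSpechtIdeal k ≤ RingHom.ker φ := by
    rw [Ideal.span_le, Set.insert_subset_iff, Set.singleton_subset_iff]
    refine ⟨?_, aeval_qD_of_eq_zero rfl k⟩
    rw [SetLike.mem_coe, RingHom.mem_ker, aeval_pD_of_sq_eq_neg_sq (by simp [hε])]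
    simp [pow_eq_zero_of_le hk hε]
  intro h
  have hε0 : (DualNumber.eps : DualNumber ℝ) = 0 := by simpa [φ] using hker h
  simpa using congrArg TrivSqZeroExt.snd hε0

theorem radical_dihedralSpechtIdeal {k : ℕ} (hk : k ≠ 0) :
    (dihedralSpechtIdeal k).radical = idealOfVars (Fin 2) ℝ :=
  le_antisymm
    (isPrime_idealOfVars.isRadical.radical_le_iff.mpr (dihedralSpechtIdeal_le_idealOfVars hk))
    (idealOfVars_le_radical_dihedralSpechtIdeal k)

theorem stmt7_general (k : ℕ) (hk1 : 2 ≤ k) :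
    ¬ (Ideal.span ({pD k, qD k} : Set (MvPolynomial (Fin 2) ℝ))).IsRadical ∧
    (Ideal.span ({pD k, qD k} : Set (MvPolynomial (Fin 2) ℝ))).radical
      = Ideal.span {X 0, X 1} := by
  have hrad := radical_dihedralSpechtIdeal (k := k) (by omega)
  rw [idealOfVars_fin_two] at hrad
  refine ⟨fun hI => X_zero_notMem_dihedralSpechtIdeal hk1 (hI ?_), hrad⟩
  rw [hrad]
  exact Ideal.subset_span (Set.mem_insert _ _)

/-- For `n ≥ 5` and `2 ≤ k ≤ ⌊(n−1)/2⌋` the ideal `I_k = (p_k, q_k)` is not radical and its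
radical is the maximal ideal `(x, y)`. -/
theorem stmt7 (n k : ℕ) (hn : 5 ≤ n) (hk1 : 2 ≤ k) (hk2 : k ≤ (n - 1) / 2) :
    ¬ (Ideal.span ({pD k, qD k} : Set (MvPolynomial (Fin 2) ℝ))).IsRadical ∧
    (Ideal.span ({pD k, qD k} : Set (MvPolynomial (Fin 2) ℝ))).radical
      = Ideal.span {X 0, X 1} :=
  stmt7_general k hk1
end

section
/- Let n be even and λ a partition of n/2 of length l. Suppose {λ,+} (or {λ,−}) covers Θ in the poset (𝒟_n, ⊴_D), i.e. Θ is strictly below {λ,±} and no element of 𝒟_n lies strictly between them. Then there exists an integer 1 ≤ p ≤ l with λ_p > λ_{p+1} such that Θ = {θ, ω}, where θ = (λ₁,…,λ_{p−1}, λ_p − 1, λ_{p+1},…,λ_l) and ω = (λ₁,…,λ_p, λ_{p+1} + 1, λ_{p+2},…,λ_l). In particular, Θ is an unordered pair of two distinct partitions. -/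
open MvPolynomial

/-- `l` is (the list of parts of) a partition: weakly decreasing positive entries. -/
def IsPtn (l : List ℕ) : Prop := l.Pairwise (· ≥ ·) ∧ ∀ x ∈ l, 0 < x

/-- `(i, c)` (row `i`, column `c`, both 0-indexed) is a cell of the Young diagram of `l`. -/
def IsCell (l : List ℕ) (p : ℕ × ℕ) : Prop := p.2 < l.getD p.1 0

/-- Length of column `c` (0-indexed) of the Young diagram of `l`. -/
def colLen (l : List ℕ) (c : ℕ) : ℕ := l.countP fun x => decide (c < x)

/-- `(tT, tS)` is a bitableau of shape `(l, m)`: a filling of the two Young diagrams with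
the integers `Fin n`, each occurring exactly once. -/
def IsBitableau (n : ℕ) (l m : List ℕ) (tT tS : ℕ × ℕ → Fin n) : Prop :=
  (∀ p q, IsCell l p → IsCell l q → tT p = tT q → p = q) ∧
  (∀ p q, IsCell m p → IsCell m q → tS p = tS q → p = q) ∧
  (∀ p q, IsCell l p → IsCell m q → tT p ≠ tS q) ∧
  ∀ k : Fin n, (∃ p, IsCell l p ∧ tT p = k) ∨ (∃ p, IsCell m p ∧ tS p = k)

/-- The `S`-Specht polynomial of the tableau `t` of shape `l`, evaluated at the squared
variables: the product over all columns of the Vandermonde determinant of the squares of the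
variables indexed by the column entries. -/
noncomputable def speSsq (K : Type*) [CommRing K] (n : ℕ) (l : List ℕ) (t : ℕ × ℕ → Fin n) :
    MvPolynomial (Fin n) K :=
  ∏ c ∈ Finset.range (l.getD 0 0), ∏ i ∈ Finset.range (colLen l c),
    ∏ j ∈ Finset.range (colLen l c),
      if i < j then X (t (i, c)) ^ 2 - X (t (j, c)) ^ 2 else 1

/-- The product of the variables indexed by the entries of a tableau of shape `l`. -/
noncomputable def prodVars (K : Type*) [CommRing K] (n : ℕ) (l : List ℕ) (t : ℕ × ℕ → Fin n) :
    MvPolynomial (Fin n) K :=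
  ∏ c ∈ Finset.range (l.getD 0 0), ∏ i ∈ Finset.range (colLen l c), X (t (i, c))

/-- The `B`-Specht polynomial of the bitableau `(tT, tS)` of shape `(l, m)`. -/
noncomputable def speB (K : Type*) [CommRing K] (n : ℕ) (l m : List ℕ)
    (tT tS : ℕ × ℕ → Fin n) : MvPolynomial (Fin n) K :=
  speSsq K n l tT * speSsq K n m tS * prodVars K n m tS

/-- The `D`-Specht polynomial of a bitableau of shape `(l, l)`; sign `true` is `+`. -/
noncomputable def speD (K : Type*) [CommRing K] (n : ℕ) (sign : Bool) (l : List ℕ)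
    (tT tS : ℕ × ℕ → Fin n) : MvPolynomial (Fin n) K :=
  if sign then speB K n l l tT tS + speB K n l l tS tT
  else speB K n l l tT tS - speB K n l l tS tT

/-- Dipartitions: an unordered pair of partitions, or a partition with a sign
(`true` is `+`, `false` is `−`). -/
inductive Dipart : Type
  | pair (s : Multiset (List ℕ)) : Dipart
  | signed (l : List ℕ) (sign : Bool) : Dipart

/-- A dipartition of `n`: an unordered pair of distinct partitions whose sizes sum to `n`,
or a signed partition of `n/2` (for even `n`). -/
def Dipart.Valid (n : ℕ) : Dipart → Prop
  | .pair s => ∃ l m : List ℕ, s = {l, m} ∧ l ≠ m ∧ IsPtn l ∧ IsPtn m ∧ l.sum + m.sum = n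
  | .signed l _ => IsPtn l ∧ 2 * l.sum = n

/-- The bidominance order on bipartitions: `bidom l m w t` means `(l,m) ⊴_B (w,t)`. -/
def bidom (l m w t : List ℕ) : Prop :=
  ∀ j : ℕ, 1 ≤ j →
    ((l.take j).sum + (m.take j).sum ≤ (w.take j).sum + (t.take j).sum ∧
      l.getD (j - 1) 0 + ((l.take (j - 1)).sum + (m.take (j - 1)).sum)
        ≤ w.getD (j - 1) 0 + ((w.take (j - 1)).sum + (t.take (j - 1)).sum))

/-- `predD l m t w` means `{l,m} ≼_D {t,w}` for unordered pairs of partitions. -/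
def predD (l m t w : List ℕ) : Prop :=
  (bidom l m t w ∨ bidom l m w t) ∧ (bidom m l t w ∨ bidom m l w t)

/-- The didominance relation `⊴_D` on dipartitions. -/
def didom : Dipart → Dipart → Prop
  | .pair s, .pair s' => ∃ l m t w, s = {l, m} ∧ s' = {t, w} ∧ predD l m t w
  | .pair s, .signed l' _ => ∃ l m, s = {l, m} ∧ predD l m l' l'
  | .signed l' _, .pair s => ∃ t w, s = {t, w} ∧ predD l' l' t w
  | .signed l b, .signed m b' => (l = m ∧ b = b') ∨ (l ≠ m ∧ predD l l m m)

/-- The `B`-Specht ideal of shape `(l, m)`. -/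
noncomputable def IdealB (K : Type*) [CommRing K] (n : ℕ) (l m : List ℕ) :
    Ideal (MvPolynomial (Fin n) K) :=
  Ideal.span {f | ∃ tT tS, IsBitableau n l m tT tS ∧ f = speB K n l m tT tS}

/-- The `D`-Specht ideal of a dipartition.  For an unordered pair `{l,m}` it is generated by
all `B`-Specht polynomials of shapes `(l,m)` and `(m,l)`; for a signed partition it is
generated by the `D`-Specht polynomials. -/
noncomputable def IdealD (K : Type*) [CommRing K] (n : ℕ) :
    Dipart → Ideal (MvPolynomial (Fin n) K)
  | .pair s => Ideal.span
      {f | ∃ l m tT tS, s = {l, m} ∧ IsBitableau n l m tT tS ∧ f = speB K n l m tT tS}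
  | .signed lam b => Ideal.span
      {f | ∃ tT tS, IsBitableau n lam lam tT tS ∧ f = speD K n b lam tT tS}

/-- The variety of the `B`-Specht ideal in `Kⁿ`. -/
def varB (K : Type*) [CommRing K] (n : ℕ) (l m : List ℕ) : Set (Fin n → K) :=
  {x | ∀ f ∈ IdealB K n l m, MvPolynomial.eval x f = 0}

/-- The variety of the `D`-Specht ideal in `Kⁿ`. -/
def varD (K : Type*) [CommRing K] (n : ℕ) (d : Dipart) : Set (Fin n → K) :=
  {x | ∀ f ∈ IdealD K n d, MvPolynomial.eval x f = 0}

/-- The signed-permutation action on `K[X₁,…,Xₙ]`: `X i ↦ ε i · X (σ i)`. -/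
noncomputable def dact (K : Type*) [CommRing K] (n : ℕ) (ε : Fin n → ℤˣ)
    (σ : Equiv.Perm (Fin n)) : MvPolynomial (Fin n) K →ₐ[K] MvPolynomial (Fin n) K :=
  MvPolynomial.aeval fun i => ((ε i : ℤ) : MvPolynomial (Fin n) K) * X (σ i)

/-!
Write `S_j(μ)` for the sum of the first `j` parts of `μ`. A dipartition `Θ` strictly below
`{λ,±}` has an underlying pair `{α, β}` (with `α = β` if `Θ` is signed) whose deficit
`s_j = 2 S_j(λ) - S_j(α) - S_j(β)` is nonnegative, positive somewhere, and zero for large `j`.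
At the first index `p` where `s` drops we have `s_p > 0`, and `λ_p > λ_{p+1}`: since `α` and `β`
are decreasing, a flat step `λ_p = λ_{p+1}` would make `s` drop already at `p - 1`.
Moving one box of `λ` from row `p` to row `p + 1` gives `θ` and `ω` with
`S_j(θ) = S_j(λ) - [p ≤ j]` and `S_j(ω) = S_j(λ) + [p < j]`; hence `{θ, ω} ⊴_D {λ,±}`,
and `Θ ⊴_D {θ, ω}` because the only new inequality, at `j = p`, is `s_p > 0`.
As `{λ,±}` covers `Θ`, this forces `Θ = {θ, ω}`.
-/

namespace List

theorem sum_take_succ_getD (l : List ℕ) (j : ℕ) :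
    (l.take (j + 1)).sum = (l.take j).sum + l.getD j 0 := by
  rcases Nat.lt_or_ge j l.length with h | h
  · rw [sum_take_succ l j h, getD_eq_getElem l 0 h]
  · rw [take_of_length_le h, take_of_length_le (by omega), getD_eq_default _ _ h, Nat.add_zero]

theorem pairwise_ge_iff_antitone_getD {l : List ℕ} :
    l.Pairwise (· ≥ ·) ↔ Antitone (l.getD · 0) := by
  refine ⟨fun hl i j hij => ?_, fun h => pairwise_iff_getElem.mpr fun i j hi hj hij => ?_⟩
  · dsimp only
    rcases Nat.lt_or_ge j l.length with hj | hj
    · rw [getD_eq_getElem l 0 hj, getD_eq_getElem l 0 (hij.trans_lt hj)]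
      rcases hij.eq_or_lt with rfl | hij
      · exact le_rfl
      · exact pairwise_iff_getElem.mp hl i j _ _ hij
    · rw [getD_eq_default _ _ hj]
      exact Nat.zero_le _
  · simpa only [getD_eq_getElem l 0 hi, getD_eq_getElem l 0 hj] using h hij.le

theorem getD_take_append_cons_drop {α : Type*} (l : List α) (d a : α) {n : ℕ}
    (hn : n ≤ l.length) (i : ℕ) :
    (l.take n ++ a :: l.drop (n + 1)).getD i d = if i = n then a else l.getD i d := by
  have hlen : (l.take n).length = n := length_take_of_le hn
  rcases lt_trichotomy i n with hi | rfl | hi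
  · rw [getD_append _ _ _ _ (by omega), if_neg hi.ne, getD_eq_getElem?_getD,
      getD_eq_getElem?_getD, getElem?_take_of_lt hi]
  · rw [getD_append_right _ _ _ _ hlen.le, hlen, Nat.sub_self, if_pos rfl]
    rfl
  · obtain ⟨k, rfl⟩ := Nat.exists_eq_add_of_lt hi
    rw [getD_append_right _ _ _ _ (by omega), hlen, if_neg (by omega),
      show n + k + 1 - n = k + 1 by omega, getD_cons_succ, getD_eq_getElem?_getD,
      getD_eq_getElem?_getD, getElem?_drop, show n + 1 + k = n + k + 1 by omega]

theorem Pairwise.getD_filter_ne_zero {l : List ℕ} (hl : l.Pairwise (· ≥ ·)) (i : ℕ) :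
    (l.filter (· ≠ 0)).getD i 0 = l.getD i 0 := by
  induction l generalizing i with
  | nil => rfl
  | cons a t ih =>
    obtain ⟨ha, ht⟩ := pairwise_cons.mp hl
    by_cases ha0 : a = 0
    · have hzero : ∀ x ∈ a :: t, x = 0 := by
        simp only [mem_cons, forall_eq_or_imp]
        exact ⟨ha0, fun x hx => by have := ha x hx; omega⟩
      rw [filter_eq_nil_iff.mpr (by simpa using hzero)]
      rcases Nat.lt_or_ge i (a :: t).length with hi | hi
      · rw [getD_eq_getElem _ _ hi, hzero _ (getElem_mem hi)]
        rfl
      · rw [getD_eq_default _ _ hi]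
        rfl
    · rw [filter_cons_of_pos (by simpa using ha0)]
      cases i with
      | zero => rfl
      | succ i => exact ih ht i

end List

theorem Antitone.ite_eq {α : Type*} [Preorder α] {f : ℕ → α} (hf : Antitone f) {n : ℕ}
    {a : α} (h₁ : f (n + 1) ≤ a) (h₂ : ∀ i < n, a ≤ f i) :
    Antitone fun i => if i = n then a else f i := by
  intro i j hij
  dsimp only
  split_ifs with hj hi hi
  · exact le_rfl
  · exact h₂ i (by omega)
  · exact (hf (by omega : n + 1 ≤ j)).trans h₁
  · exact hf hij

theorem IsPtn.ext_getD {a b : List ℕ} (ha : IsPtn a) (hb : IsPtn b)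
    (h : ∀ j, a.getD j 0 = b.getD j 0) : a = b := by
  have length_le : ∀ {a b : List ℕ}, IsPtn b → (∀ j, a.getD j 0 = b.getD j 0) →
      b.length ≤ a.length := fun {a b} hb h => by
    by_contra! hlt
    have := hb.2 _ (List.getElem_mem hlt)
    rw [← List.getD_eq_getElem b 0 hlt, ← h, List.getD_eq_default _ _ le_rfl] at this
    exact this.false
  refine List.ext_getElem (le_antisymm (length_le ha fun j => (h j).symm) (length_le hb h))
    fun i h₁ h₂ => ?_
  simpa only [List.getD_eq_getElem _ 0 h₁, List.getD_eq_getElem _ 0 h₂] using h i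

theorem Nat.exists_succ_lt_of_lt {α : Type*} [LinearOrder α] {f : ℕ → α} {m N : ℕ}
    (hmN : m ≤ N) (h : f N < f m) : ∃ p, f (p + 1) < f p := by
  by_contra! hmono
  exact (monotone_nat_of_le_succ hmono hmN).not_gt h

theorem bidom_iff_sum_take {l m w t : List ℕ} :
    bidom l m w t ↔ ∀ k,
      (l.take (k + 1)).sum + (m.take (k + 1)).sum ≤
          (w.take (k + 1)).sum + (t.take (k + 1)).sum ∧
        (l.take (k + 1)).sum + (m.take k).sum ≤ (w.take (k + 1)).sum + (t.take k).sum := by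
  refine ⟨fun h k => ?_, fun h j hj => ?_⟩
  · have := h (k + 1) (by omega)
    simp only [Nat.add_sub_cancel, List.sum_take_succ_getD] at this ⊢
    omega
  · obtain ⟨k, rfl⟩ := Nat.exists_eq_add_of_le' hj
    have := h k
    simp only [Nat.add_sub_cancel, List.sum_take_succ_getD] at this ⊢
    omega

section SumTake

variable {lam θ ω : List ℕ} {p : ℕ}

theorem bidom_le_of_sum_take
    (hθ : ∀ j, (θ.take j).sum + (if p ≤ j then 1 else 0) = (lam.take j).sum)
    (hω : ∀ j, (ω.take j).sum = (lam.take j).sum + if p < j then 1 else 0) :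
    bidom θ ω lam lam ∧ bidom ω θ lam lam := by
  simp only [bidom_iff_sum_take]
  refine ⟨fun k => ?_, fun k => ?_⟩ <;>
  · have := hθ k; have := hθ (k + 1); have := hω k; have := hω (k + 1)
    split_ifs at * <;> omega

theorem bidom_of_sum_take_lt
    (hθ : ∀ j, (θ.take j).sum + (if p ≤ j then 1 else 0) = (lam.take j).sum)
    (hω : ∀ j, (ω.take j).sum = (lam.take j).sum + if p < j then 1 else 0)
    {α β : List ℕ} (hαβ : bidom α β lam lam)
    (hlt : (α.take p).sum + (β.take p).sum < 2 * (lam.take p).sum) : bidom α β ω θ := by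
  rw [bidom_iff_sum_take] at hαβ ⊢
  intro k
  have := hαβ k; have := hθ k; have := hθ (k + 1); have := hω k; have := hω (k + 1)
  by_cases hk : k + 1 = p
  · subst hk
    split_ifs at * <;> omega
  · split_ifs at * <;> omega

end SumTake

theorem eq_of_bidom_of_sum_take_eq {lam α β : List ℕ} (hlam : IsPtn lam) (hα : IsPtn α)
    (hβ : IsPtn β) (hαβ : bidom α β lam lam) (hβα : bidom β α lam lam)
    (h : ∀ j, (α.take j).sum + (β.take j).sum = 2 * (lam.take j).sum) :
    α = lam ∧ β = lam := by
  have hparts : ∀ j, α.getD j 0 = lam.getD j 0 ∧ β.getD j 0 = lam.getD j 0 := fun j => by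
    have hj := h j
    have hj' := h (j + 1)
    have hα_le := (bidom_iff_sum_take.mp hαβ j).2
    have hβ_le := (bidom_iff_sum_take.mp hβα j).2
    simp only [List.sum_take_succ_getD] at hj' hα_le hβ_le
    omega
  exact ⟨hα.ext_getD hlam fun j => (hparts j).1, hβ.ext_getD hlam fun j => (hparts j).2⟩

theorem exists_corner_of_predD {lam α β : List ℕ} (hlam : IsPtn lam) (hα : IsPtn α)
    (hβ : IsPtn β) (hpred : predD α β lam lam) (hsum : α.sum + β.sum = 2 * lam.sum)
    (hne : ¬(α = lam ∧ β = lam)) :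
    ∃ p, 1 ≤ p ∧ p ≤ lam.length ∧ lam.getD p 0 < lam.getD (p - 1) 0 ∧
      (α.take p).sum + (β.take p).sum < 2 * (lam.take p).sum := by
  have hαβ : bidom α β lam lam := hpred.1.elim id id
  have hβα : bidom β α lam lam := hpred.2.elim id id
  let s (j : ℕ) : ℤ := 2 * (lam.take j).sum - (α.take j).sum - (β.take j).sum
  have hs_succ (j : ℕ) : s (j + 1) = s j + 2 * lam.getD j 0 - α.getD j 0 - β.getD j 0 := by
    simp only [s, List.sum_take_succ_getD]
    push_cast
    ring
  have hs_zero : s 0 = 0 := by simp [s]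
  have hs_nonneg : ∀ j, 0 ≤ s j := by
    rintro (_ | k)
    · exact hs_zero.ge
    · have := (bidom_iff_sum_take.mp hαβ k).1
      simp only [s]
      omega
  have hs_pos : ∃ m, 0 < s m := by
    by_contra! h
    refine hne (eq_of_bidom_of_sum_take_eq hlam hα hβ hαβ hβα fun j => ?_)
    have := h j
    have := hs_nonneg j
    simp only [s] at *
    omega
  have hdrop : ∃ p, s (p + 1) < s p := by
    obtain ⟨m, hm⟩ := hs_pos
    set N := m + lam.length + α.length + β.length
    have hN : s N = 0 := by
      simp only [s]
      rw [List.take_of_length_le (l := lam) (by omega),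
        List.take_of_length_le (l := α) (by omega), List.take_of_length_le (l := β) (by omega)]
      omega
    exact Nat.exists_succ_lt_of_lt (show m ≤ N by omega) (hN ▸ hm)
  classical
  set p := Nat.find hdrop
  have hp_drop : s (p + 1) < s p := Nat.find_spec hdrop
  have hp : 1 ≤ p := by
    by_contra! h0
    rw [Nat.lt_one_iff.mp h0, hs_zero] at hp_drop
    exact (hs_nonneg 1).not_gt hp_drop
  have hcorner : lam.getD p 0 < lam.getD (p - 1) 0 := by
    by_contra! hflat
    have hα_le : α.getD p 0 ≤ α.getD (p - 1) 0 :=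
      List.pairwise_ge_iff_antitone_getD.mp hα.1 (Nat.sub_le p 1)
    have hβ_le : β.getD p 0 ≤ β.getD (p - 1) 0 :=
      List.pairwise_ge_iff_antitone_getD.mp hβ.1 (Nat.sub_le p 1)
    have h₁ := hs_succ p
    have h₂ := hs_succ (p - 1)
    rw [Nat.sub_add_cancel hp] at h₂
    exact Nat.find_min hdrop (show p - 1 < p by omega) (by rw [Nat.sub_add_cancel hp]; omega)
  refine ⟨p, hp, ?_, hcorner, ?_⟩
  · by_contra! hlen
    rw [List.getD_eq_default _ _ (by omega : lam.length ≤ p - 1)] at hcorner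
    omega
  · have := hs_nonneg (p + 1)
    simp only [s] at this hp_drop
    omega

/-- `p` is 1-indexed as in the paper: `lowerAt lam p` lowers `λ_p = lam.getD (p - 1) 0` by one
(dropping it if it becomes `0`); `raiseAt lam p` raises `λ_{p+1} = lam.getD p 0` by one. -/
def lowerAt (lam : List ℕ) (p : ℕ) : List ℕ :=
  (lam.take (p - 1) ++ (lam.getD (p - 1) 0 - 1) :: lam.drop p).filter fun x => decide (x ≠ 0)

def raiseAt (lam : List ℕ) (p : ℕ) : List ℕ :=
  lam.take p ++ (lam.getD p 0 + 1) :: lam.drop (p + 1)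

section Corner

variable {lam : List ℕ} {p : ℕ}

theorem getD_raiseAt (hpL : p ≤ lam.length) (i : ℕ) :
    (raiseAt lam p).getD i 0 = if i = p then lam.getD p 0 + 1 else lam.getD i 0 :=
  lam.getD_take_append_cons_drop 0 _ hpL i

theorem getD_lowerAt_prefilter (hp : 1 ≤ p) (hpL : p ≤ lam.length) (i : ℕ) :
    (lam.take (p - 1) ++ (lam.getD (p - 1) 0 - 1) :: lam.drop p).getD i 0 =
      if i = p - 1 then lam.getD (p - 1) 0 - 1 else lam.getD i 0 := by
  have h := lam.getD_take_append_cons_drop 0 (lam.getD (p - 1) 0 - 1) (n := p - 1) (by omega) i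
  rwa [Nat.sub_add_cancel hp] at h

theorem pairwise_lowerAt_prefilter (hlam : IsPtn lam) (hp : 1 ≤ p) (hpL : p ≤ lam.length)
    (hcorner : lam.getD p 0 < lam.getD (p - 1) 0) :
    (lam.take (p - 1) ++ (lam.getD (p - 1) 0 - 1) :: lam.drop p).Pairwise (· ≥ ·) := by
  have hanti := List.pairwise_ge_iff_antitone_getD.mp hlam.1
  rw [List.pairwise_ge_iff_antitone_getD, funext (getD_lowerAt_prefilter hp hpL)]
  refine hanti.ite_eq ?_ fun i hi => (Nat.sub_le _ _).trans (hanti hi.le)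
  rw [Nat.sub_add_cancel hp]
  omega

theorem getD_lowerAt (hlam : IsPtn lam) (hp : 1 ≤ p) (hpL : p ≤ lam.length)
    (hcorner : lam.getD p 0 < lam.getD (p - 1) 0) (i : ℕ) :
    (lowerAt lam p).getD i 0 = if i = p - 1 then lam.getD (p - 1) 0 - 1 else lam.getD i 0 := by
  rw [lowerAt, (pairwise_lowerAt_prefilter hlam hp hpL hcorner).getD_filter_ne_zero,
    getD_lowerAt_prefilter hp hpL]

theorem IsPtn.lowerAt (hlam : IsPtn lam) (hp : 1 ≤ p) (hpL : p ≤ lam.length)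
    (hcorner : lam.getD p 0 < lam.getD (p - 1) 0) : IsPtn (lowerAt lam p) :=
  ⟨(pairwise_lowerAt_prefilter hlam hp hpL hcorner).sublist List.filter_sublist,
    fun x hx => Nat.pos_of_ne_zero (by simpa using (List.mem_filter.mp hx).2)⟩

theorem IsPtn.raiseAt (hlam : IsPtn lam) (hp : 1 ≤ p) (hpL : p ≤ lam.length)
    (hcorner : lam.getD p 0 < lam.getD (p - 1) 0) : IsPtn (raiseAt lam p) := by
  have hanti := List.pairwise_ge_iff_antitone_getD.mp hlam.1
  refine ⟨?_, fun x hx => ?_⟩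
  · rw [List.pairwise_ge_iff_antitone_getD, funext (getD_raiseAt hpL)]
    have hsucc : lam.getD (p + 1) 0 ≤ lam.getD p 0 := hanti (Nat.le_succ p)
    exact hanti.ite_eq (by omega) fun i hi =>
      have : lam.getD (p - 1) 0 ≤ lam.getD i 0 := hanti (by omega)
      by omega
  · simp only [_root_.raiseAt, List.mem_append, List.mem_cons] at hx
    rcases hx with hx | rfl | hx
    · exact hlam.2 x (List.mem_of_mem_take hx)
    · exact Nat.succ_pos _
    · exact hlam.2 x (List.mem_of_mem_drop hx)

theorem sum_take_add_ite_of_getD_eq_ite {l m : List ℕ} {n a : ℕ}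
    (h : ∀ i, l.getD i 0 = if i = n then a else m.getD i 0) (j : ℕ) :
    (l.take j).sum + (if n < j then m.getD n 0 else 0) =
      (m.take j).sum + if n < j then a else 0 := by
  induction j with
  | zero => simp
  | succ j ih =>
    rw [List.sum_take_succ_getD, List.sum_take_succ_getD, h j]
    split_ifs at * <;> (try subst_vars) <;> omega

theorem sum_take_lowerAt (hlam : IsPtn lam) (hp : 1 ≤ p) (hpL : p ≤ lam.length)
    (hcorner : lam.getD p 0 < lam.getD (p - 1) 0) (j : ℕ) :
    ((lowerAt lam p).take j).sum + (if p ≤ j then 1 else 0) = (lam.take j).sum := by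
  have h := sum_take_add_ite_of_getD_eq_ite (getD_lowerAt hlam hp hpL hcorner) j
  split_ifs at * <;> omega

theorem sum_take_raiseAt (hpL : p ≤ lam.length) (j : ℕ) :
    ((raiseAt lam p).take j).sum = (lam.take j).sum + if p < j then 1 else 0 := by
  have h := sum_take_add_ite_of_getD_eq_ite (getD_raiseAt hpL) j
  split_ifs at * <;> omega

theorem sum_lowerAt (hlam : IsPtn lam) (hp : 1 ≤ p) (hpL : p ≤ lam.length)
    (hcorner : lam.getD p 0 < lam.getD (p - 1) 0) : (lowerAt lam p).sum + 1 = lam.sum := by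
  have h := sum_take_lowerAt hlam hp hpL hcorner ((lowerAt lam p).length + lam.length + p)
  rwa [List.take_of_length_le (by omega), List.take_of_length_le (by omega),
    if_pos (by omega)] at h

theorem sum_raiseAt (hpL : p ≤ lam.length) : (raiseAt lam p).sum = lam.sum + 1 := by
  have h := sum_take_raiseAt hpL ((raiseAt lam p).length + lam.length + p + 1)
  rwa [List.take_of_length_le (by omega), List.take_of_length_le (by omega),
    if_pos (by omega)] at h

theorem valid_pair_lowerAt_raiseAt (hlam : IsPtn lam) (hp : 1 ≤ p) (hpL : p ≤ lam.length)
    (hcorner : lam.getD p 0 < lam.getD (p - 1) 0) :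
    (Dipart.pair {lowerAt lam p, raiseAt lam p}).Valid (2 * lam.sum) := by
  have hθ := sum_lowerAt hlam hp hpL hcorner
  have hω := sum_raiseAt hpL
  refine ⟨_, _, rfl, fun h => ?_, hlam.lowerAt hp hpL hcorner, hlam.raiseAt hp hpL hcorner,
    by omega⟩
  rw [h] at hθ
  omega

theorem didom_pair_lowerAt_raiseAt_signed (hlam : IsPtn lam) (hp : 1 ≤ p) (hpL : p ≤ lam.length)
    (hcorner : lam.getD p 0 < lam.getD (p - 1) 0) (b : Bool) :
    didom (.pair {lowerAt lam p, raiseAt lam p}) (.signed lam b) := by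
  obtain ⟨h₁, h₂⟩ :=
    bidom_le_of_sum_take (sum_take_lowerAt hlam hp hpL hcorner) (sum_take_raiseAt hpL)
  exact ⟨_, _, rfl, Or.inl h₁, Or.inl h₂⟩

theorem predD_lowerAt_raiseAt (hlam : IsPtn lam) (hp : 1 ≤ p) (hpL : p ≤ lam.length)
    (hcorner : lam.getD p 0 < lam.getD (p - 1) 0) {α β : List ℕ} (hpred : predD α β lam lam)
    (hlt : (α.take p).sum + (β.take p).sum < 2 * (lam.take p).sum) :
    predD α β (lowerAt lam p) (raiseAt lam p) := by
  have hθ := sum_take_lowerAt hlam hp hpL hcorner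
  have hω := sum_take_raiseAt hpL
  exact ⟨Or.inr (bidom_of_sum_take_lt hθ hω (hpred.1.elim id id) hlt),
    Or.inr (bidom_of_sum_take_lt hθ hω (hpred.2.elim id id) (by omega))⟩

end Corner

theorem Multiset.pair_eq_pair {α : Type*} {a b c d : α} (h : ({a, b} : Multiset α) = {c, d}) :
    a = c ∧ b = d ∨ a = d ∧ b = c := by
  rw [Multiset.insert_eq_cons, Multiset.insert_eq_cons, Multiset.cons_eq_cons] at h
  rcases h with ⟨rfl, h⟩ | ⟨-, cs, h₁, h₂⟩
  · exact Or.inl ⟨rfl, Multiset.singleton_inj.mp h⟩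
  · rw [Multiset.singleton_eq_cons_iff] at h₁ h₂
    exact Or.inr ⟨h₂.1.symm, h₁.1⟩

theorem predD_comm {l m t w : List ℕ} (h : predD l m t w) : predD m l t w := h.symm

/-- In `didom`, a signed dipartition `{λ, ±}` is compared through the pair `{λ, λ}`. -/
def Dipart.toPair : Dipart → Multiset (List ℕ)
  | .pair s => s
  | .signed l _ => {l, l}

theorem Dipart.didom_pair_of_predD {Θ : Dipart} {α β t w : List ℕ} (hΘ : Θ.toPair = {α, β})
    (h : predD α β t w) : didom Θ (.pair {t, w}) := by
  cases Θ with
  | pair s => exact ⟨α, β, t, w, hΘ, rfl, h⟩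
  | signed l b =>
    obtain ⟨rfl, rfl⟩ | ⟨rfl, rfl⟩ := Multiset.pair_eq_pair hΘ <;> exact ⟨t, w, rfl, h⟩

theorem Dipart.exists_predD_of_didom_signed {Θ : Dipart} {n : ℕ} {lam : List ℕ} {b : Bool}
    (hΘ : Θ.Valid n) (hle : didom Θ (.signed lam b)) (hne : Θ ≠ .signed lam b) :
    ∃ α β, Θ.toPair = {α, β} ∧ IsPtn α ∧ IsPtn β ∧ α.sum + β.sum = n ∧
      predD α β lam lam ∧ ¬(α = lam ∧ β = lam) := by
  cases Θ with
  | pair s =>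
    obtain ⟨l, m, rfl, hlm, hl, hm, hsum⟩ := hΘ
    obtain ⟨α, β, hs, hpred⟩ := hle
    refine ⟨l, m, rfl, hl, hm, hsum, ?_, fun h => hlm (h.1.trans h.2.symm)⟩
    obtain ⟨rfl, rfl⟩ | ⟨rfl, rfl⟩ := Multiset.pair_eq_pair hs
    exacts [hpred, predD_comm hpred]
  | signed μ b' =>
    obtain ⟨hμ, hsum⟩ := hΘ
    rcases hle with ⟨rfl, rfl⟩ | ⟨hμlam, hpred⟩
    · exact absurd rfl hne
    · exact ⟨μ, μ, rfl, hμ, hμ, by omega, hpred, fun h => hμlam h.1⟩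

/-- If `{λ,±}` covers `Θ` in the didominance order on dipartitions of `n` (with `λ` a partition
of `n/2`), then `Θ = {θ, ω}` where, for some `1 ≤ p ≤ len λ` with `λ_p > λ_{p+1}`, `θ` is `λ`
with the `p`-th part decreased by one and `ω` is `λ` with the `(p+1)`-st part increased by one.
In particular `Θ` is an unordered pair of two distinct partitions. -/
theorem stmt11 (n : ℕ) (lam : List ℕ) (b : Bool) (hlam : IsPtn lam) (hsum : 2 * lam.sum = n)
    (Θ : Dipart) (hΘ : Θ.Valid n)
    (hle : didom Θ (Dipart.signed lam b)) (hne : Θ ≠ Dipart.signed lam b)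
    (hcov : ∀ Ω : Dipart, Ω.Valid n → didom Θ Ω → didom Ω (Dipart.signed lam b) →
      Ω = Θ ∨ Ω = Dipart.signed lam b) :
    ∃ p : ℕ, 1 ≤ p ∧ p ≤ lam.length ∧ lam.getD p 0 < lam.getD (p - 1) 0 ∧
      Θ = Dipart.pair
        {(lam.take (p - 1) ++ (lam.getD (p - 1) 0 - 1) :: lam.drop p).filter
            (fun x => decide (x ≠ 0)),
         lam.take p ++ (lam.getD p 0 + 1) :: lam.drop (p + 1)} := by
  obtain ⟨α, β, hΘαβ, hα, hβ, hsumαβ, hpred, hαβ_ne⟩ :=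
    Θ.exists_predD_of_didom_signed hΘ hle hne
  obtain ⟨p, hp, hpL, hcorner, hlt⟩ :=
    exists_corner_of_predD hlam hα hβ hpred (by omega) hαβ_ne
  have hΩ := hsum ▸ valid_pair_lowerAt_raiseAt hlam hp hpL hcorner
  have hΘΩ := Θ.didom_pair_of_predD hΘαβ (predD_lowerAt_raiseAt hlam hp hpL hcorner hpred hlt)
  rcases hcov _ hΩ hΘΩ (didom_pair_lowerAt_raiseAt_signed hlam hp hpL hcorner b) with h | h
  · exact ⟨p, hp, hpL, hcorner, h.symm⟩
  · exact Dipart.noConfusion h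
end
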